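/- arXiv:2512.05258 — 2 statements merged into one kernel-verified Lean document; each statement's English description precedes it below -/
import Mathlib

section
/- Define the residual T(A,B) = B³·[x(1+A/B)(A/B)' + (αx−β)(A/B) + αx] = x(A+B)(BA'−AB') + B((αx−β)AB + αxB²) for polynomials A, B with B(0)=1. If A has degree ≤ n, B has degree ≤ n, A(0)=0, and T(A,B) ≡ 0 mod x^{2n+1}, then the rational function A/B agrees with any formal power series solution y of x(1+y)y' + (αx−β)y + αx = 0, y(0)=0, through order x^{2n} (assuming β ∉ {1,…,2n} so the series solution is unique). -/
/-!
Put `z = A/B` in `ℝ⟦X⟧` and let `R(u) = X(1+u)u' + (αX−β)u + αX` be the residual of the equation.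
Clearing denominators gives `T(A,B) = B³ R(z)`, and `B` is a unit, so `R(z) ≡ 0 mod X^{2n+1}`.
For `u(0) = 0` the coefficient of `X^{m+1}` in `R(u)` is `(m+1−β) u_{m+1}` plus terms in
`u_1, …, u_m` only, so these congruences determine the coefficients of `z` and of `y` through
`X^{2n}` by the same recursion.
-/

open Polynomial PowerSeries

namespace PowerSeries

theorem coeff_mul_derivative_congr {R : Type*} [CommSemiring R] {u v : R⟦X⟧} {m : ℕ}
    (hu : constantCoeff u = 0) (hv : constantCoeff v = 0)
    (huv : ∀ i ≤ m, coeff i u = coeff i v) :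
    coeff m (u * d⁄dX R u) = coeff m (v * d⁄dX R v) := by
  rw [coeff_mul, coeff_mul]
  refine Finset.sum_congr rfl fun p hp => ?_
  rw [Finset.HasAntidiagonal.mem_antidiagonal] at hp
  -- `u_{m+1}` only enters through the term `u_0 · (m+1) u_{m+1}`, which vanishes.
  rcases Nat.eq_zero_or_pos p.1 with h0 | hpos
  · simp [h0, hu, hv]
  · rw [coeff_derivative, coeff_derivative, huv p.1 (by omega), huv (p.2 + 1) (by omega)]

variable {R : Type*} [CommRing R]

noncomputable def riccatiResidual (α β : R) (u : R⟦X⟧) : R⟦X⟧ :=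
  X * (1 + u) * d⁄dX R u + (C α * X - C β) * u + C α * X

theorem coeff_succ_riccatiResidual (α β : R) (u : R⟦X⟧) (m : ℕ) :
    coeff (m + 1) (riccatiResidual α β u)
      = ((m + 1 : R) - β) * coeff (m + 1) u + coeff m (u * d⁄dX R u)
        + α * coeff m u + α * coeff m (1 : R⟦X⟧) := by
  have h : riccatiResidual α β u
      = X * (d⁄dX R u + u * d⁄dX R u) + (C α * (X * u) - C β * u) + C α * (X * 1) := by
    unfold riccatiResidual; ring
  rw [h]
  simp only [map_add, map_sub, coeff_succ_X_mul, coeff_C_mul, coeff_derivative]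
  ring

theorem coeff_eq_of_riccatiResidual [NoZeroDivisors R] {α β : R} {N : ℕ}
    (hβ : ∀ j : ℕ, 1 ≤ j → j ≤ N → β ≠ (j : R)) {u v : R⟦X⟧}
    (hu0 : constantCoeff u = 0) (hv0 : constantCoeff v = 0)
    (hu : X ^ (N + 1) ∣ riccatiResidual α β u) (hv : X ^ (N + 1) ∣ riccatiResidual α β v) :
    ∀ k ≤ N, coeff k u = coeff k v := by
  intro k
  induction k using Nat.strong_induction_on with
  | _ k ih =>
    intro hk
    rcases k with _ | m
    · simp [hu0, hv0]
    · have hlower : ∀ i ≤ m, coeff i u = coeff i v := fun i hi => ih i (by omega) (by omega)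
      have hres : coeff (m + 1) (riccatiResidual α β u)
          = coeff (m + 1) (riccatiResidual α β v) := by
        rw [X_pow_dvd_iff.mp hu _ (by omega), X_pow_dvd_iff.mp hv _ (by omega)]
      rw [coeff_succ_riccatiResidual, coeff_succ_riccatiResidual,
        coeff_mul_derivative_congr hu0 hv0 hlower, hlower m le_rfl] at hres
      have hne : (m + 1 : R) - β ≠ 0 := by
        rw [sub_ne_zero]
        exact_mod_cast (hβ (m + 1) (by omega) hk).symm
      exact mul_left_cancel₀ hne (by linear_combination hres)

theorem riccatiResidual_mul_inv_mul_pow_three {K : Type*} [Field K] (α β : K) (a b : K⟦X⟧)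
    (hb : constantCoeff b ≠ 0) :
    riccatiResidual α β (a * b⁻¹) * b ^ 3
      = X * (a + b) * (b * d⁄dX K a - a * d⁄dX K b)
        + b * ((C α * X - C β) * (a * b) + C α * X * b ^ 2) := by
  obtain ⟨z, rfl⟩ : ∃ z, a = z * b :=
    ⟨a * b⁻¹, by rw [mul_assoc, PowerSeries.inv_mul_cancel b hb, mul_one]⟩
  rw [mul_assoc, PowerSeries.mul_inv_cancel b hb, mul_one, Derivation.leibniz,
    smul_eq_mul, smul_eq_mul]
  unfold riccatiResidual
  ring

end PowerSeries

namespace Polynomial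

/-- The residual `T(A, B)` of the paper. -/
noncomputable def padeResidual {R : Type*} [CommRing R] (α β : R) (A B : R[X]) : R[X] :=
  X * (A + B) * (B * derivative A - A * derivative B)
    + B * ((C α * X - C β) * (A * B) + C α * X * B ^ 2)

variable {K : Type*} [Field K]

theorem coe_padeResidual (α β : K) (A B : K[X]) (hB : B.coeff 0 ≠ 0) :
    (padeResidual α β A B : K⟦X⟧)
      = riccatiResidual α β (A * (B : K⟦X⟧)⁻¹) * (B : K⟦X⟧) ^ 3 := by
  rw [riccatiResidual_mul_inv_mul_pow_three _ _ _ _ (by simpa using hB), padeResidual]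
  simp [derivative_coe]

theorem X_pow_dvd_riccatiResidual_of_dvd_padeResidual {α β : K} {A B : K[X]}
    (hB : B.coeff 0 ≠ 0) {N : ℕ} (h : X ^ N ∣ padeResidual α β A B) :
    PowerSeries.X ^ N ∣ riccatiResidual α β (A * (B : K⟦X⟧)⁻¹) := by
  have hunit : IsUnit ((B : K⟦X⟧) ^ 3) :=
    (PowerSeries.isUnit_iff_constantCoeff.mpr (by simpa using hB.isUnit)).pow 3
  rw [← hunit.dvd_mul_right, ← coe_padeResidual α β A B hB]
  obtain ⟨q, hq⟩ := h
  exact ⟨q, by rw [hq]; simp⟩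

end Polynomial

theorem pade_agreement_general (α β : ℝ) (n : ℕ)
    (hβ : ∀ j : ℕ, 1 ≤ j → j ≤ 2 * n → β ≠ (j : ℝ))
    (y : PowerSeries ℝ) (hy0 : PowerSeries.constantCoeff y = 0)
    (hode : PowerSeries.X * (1 + y) * y.derivativeFun
        + (PowerSeries.C α * PowerSeries.X - PowerSeries.C β) * y
        + PowerSeries.C α * PowerSeries.X = 0)
    (A B : ℝ[X])
    (hA0 : A.coeff 0 = 0) (hB0 : B.coeff 0 = 1)
    (hT : (X : ℝ[X]) ^ (2 * n + 1) ∣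
      Polynomial.X * (A + B) * (B * derivative A - A * derivative B)
        + B * ((Polynomial.C α * Polynomial.X - Polynomial.C β) * (A * B)
          + Polynomial.C α * Polynomial.X * B ^ 2)) :
    ∀ k : ℕ, k ≤ 2 * n →
      PowerSeries.coeff k ((A : PowerSeries ℝ) * (B : PowerSeries ℝ)⁻¹)
        = PowerSeries.coeff k y := by
  have hres : PowerSeries.X ^ (2 * n + 1) ∣ riccatiResidual α β (A * (B : ℝ⟦X⟧)⁻¹) :=
    X_pow_dvd_riccatiResidual_of_dvd_padeResidual (by simp [hB0]) hT
  have hyres : riccatiResidual α β y = 0 := hode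
  exact coeff_eq_of_riccatiResidual hβ (by simp [hA0]) hy0 hres (hyres ▸ dvd_zero _)

/-- If `A, B` are polynomials of degree `≤ n` with `A(0) = 0`, `B(0) = 1` and the residual
`T(A,B) = x(A+B)(BA'−AB') + B((αx−β)AB + αxB²)` vanishes through order `x^{2n}`, then the
rational function `A/B` agrees with any formal power series solution `y` of
`x(1+y)y' + (αx−β)y + αx = 0`, `y(0)=0`, through order `x^{2n}` (with `β` not a positive
integer `≤ 2n`). -/
theorem pade_agreement (α β : ℝ) (n : ℕ)
    (hβ : ∀ j : ℕ, 1 ≤ j → j ≤ 2 * n → β ≠ (j : ℝ))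
    (y : PowerSeries ℝ) (hy0 : PowerSeries.constantCoeff y = 0)
    (hode : PowerSeries.X * (1 + y) * y.derivativeFun
        + (PowerSeries.C α * PowerSeries.X - PowerSeries.C β) * y
        + PowerSeries.C α * PowerSeries.X = 0)
    (A B : ℝ[X]) (hAdeg : A.degree ≤ (n : ℕ∞)) (hBdeg : B.degree ≤ (n : ℕ∞))
    (hA0 : A.coeff 0 = 0) (hB0 : B.coeff 0 = 1)
    (hT : (X : ℝ[X]) ^ (2 * n + 1) ∣
      Polynomial.X * (A + B) * (B * derivative A - A * derivative B)
        + B * ((Polynomial.C α * Polynomial.X - Polynomial.C β) * (A * B)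
          + Polynomial.C α * Polynomial.X * B ^ 2)) :
    ∀ k : ℕ, k ≤ 2 * n →
      PowerSeries.coeff k ((A : PowerSeries ℝ) * (B : PowerSeries ℝ)⁻¹)
        = PowerSeries.coeff k y :=
  pade_agreement_general α β n hβ y hy0 hode A B hA0 hB0 hT
end

section
/- For the diagonal Padé data of the Michaelis-Menten equation with n=0 and n=1: T₀ = αx (so τ_{0,1} = α), and u_{1,1} = τ_{0,1} = α; more generally, whenever αₙ is chosen by the formula αₙ = −τ_{n−1,1}/(u_{n−1,1} + 2(−1)^{n−2}α_{n−1}⋯α₁) and βₙ by the corresponding order-x^{2n} condition, the leading coefficient of Uₙ satisfies u_{n,1} = τ_{n−1,1}. -/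
open Polynomial

set_option maxHeartbeats 1600000 in
theorem u_leading_coeff_eq_tau (α β : ℝ) (a b : ℕ → ℝ) (A B F H L J T U Δ : ℕ → ℝ[X])
    (hA0 : A 0 = 0) (hB0 : B 0 = 1)
    (hA1 : A 1 = -(C (a 1)) * X) (hB1 : B 1 = 1 + C (b 1) * X)
    (hA : ∀ n, 2 ≤ n → A n = (1 + C (b n) * X) * A (n - 1) + C (a n) * X ^ 2 * A (n - 2))
    (hB : ∀ n, 2 ≤ n → B n = (1 + C (b n) * X) * B (n - 1) + C (a n) * X ^ 2 * B (n - 2))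
    (hF : ∀ n, F n = B n * derivative (A n) - A n * derivative (B n))
    (hH : ∀ n, H n = (C α * X - C β) * (A n * B n) + C α * X * (B n) ^ 2)
    (hL : ∀ n, L n = derivative (A (n - 1)) * B n - derivative (B (n - 1)) * A n
        + derivative (A n) * B (n - 1) - derivative (B n) * A (n - 1))
    (hJ : ∀ n, J n = (C α * X - C β) * (A (n - 1) * B n + B (n - 1) * A n)
        + 2 * C α * X * (B (n - 1) * B n))
    (hT : ∀ n, T n = X * (A n + B n) * F n + B n * H n)
    (hU : ∀ n, U n = X * ((A n + B n) * L n + (A (n - 1) + B (n - 1)) * F n)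
        + B n * J n + B (n - 1) * H n)
    (hΔ : ∀ n, Δ n = A (n - 1) * B n - A n * B (n - 1))
    (hTvan : ∀ n, ∀ k, k ≤ 2 * n → (T n).coeff k = 0)
    (hUvan : ∀ n, 1 ≤ n → ∀ k, k ≤ 2 * (n - 1) → (U n).coeff k = 0)
    (ha : ∀ n, 2 ≤ n →
      a n * ((U (n - 1)).coeff (2 * n - 3)
          + 2 * (-1 : ℝ) ^ (n - 2) * ∏ i ∈ Finset.Icc 1 (n - 1), a i)
        = -((T (n - 1)).coeff (2 * n - 1))) :
    T 0 = C α * X ∧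
      ∀ n, 1 ≤ n → (U n).coeff (2 * n - 1) = (T (n - 1)).coeff (2 * n - 1) := by
  -- constant coefficients of A and B
  have hABev : ∀ m, (A m).eval 0 = 0 ∧ (B m).eval 0 = 1 := by
    intro m
    induction m using Nat.strong_induction_on with
    | _ m ih =>
      match m with
      | 0 => rw [hA0, hB0]; simp
      | 1 => rw [hA1, hB1]; simp
      | (k+2) =>
        obtain ⟨h1, h2⟩ := ih (k+1) (by omega)
        obtain ⟨h3, h4⟩ := ih k (by omega)
        rw [hA (k+2) (by omega), hB (k+2) (by omega)]
        constructor <;> simp [h1, h2, h3, h4]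
  have hT0 : T 0 = C α * X := by
    rw [hT 0, hF 0, hH 0, hA0, hB0]
    simp only [derivative_zero, derivative_one]
    ring
  -- closed form for Δ
  have hDel : ∀ m : ℕ, Δ (m+1)
      = C ((-1:ℝ)^m * ∏ i ∈ Finset.Icc 1 (m+1), a i) * X^(2*m+1) := by
    intro m
    induction m with
    | zero =>
      rw [hΔ 1]
      simp only [show (1:ℕ)-1 = 0 from rfl]
      rw [hA0, hA1, hB0]
      simp only [pow_zero, one_mul, Finset.Icc_self, Finset.prod_singleton, pow_one]
      ring
    | succ k ihk =>
      have hrec : Δ (k+2) = -(C (a (k+2)) * X^2) * Δ (k+1) := by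
        rw [hΔ (k+2), hΔ (k+1)]
        simp only [show k+2-1 = k+1 from rfl, show k+1-1 = k from rfl]
        rw [hA (k+2) (by omega), hB (k+2) (by omega)]
        simp only [show k+2-1 = k+1 from rfl, show k+2-2 = k from rfl]
        ring
      rw [hrec, ihk, Finset.prod_Icc_succ_top (show 1 ≤ k+2 by omega)]
      simp only [map_mul, map_pow, map_neg, map_one]
      ring
  -- master identity
  have master : ∀ m : ℕ, U (m+2) = C 3 * T (m+1)
      + C (6 * b (m+2)) * T (m+1) * X^1
      + C (3 * b (m+2)^2) * T (m+1) * X^2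
      + C (2 * a (m+2)) * U (m+1) * X^2
      + C (2 * (a (m+2) * b (m+2))) * U (m+1) * X^3
      + C (a (m+2)^2) * (X * ((A m + B m) * L (m+1) + (A (m+1) + B (m+1)) * F m)
          + B m * J (m+1) + B (m+1) * H m) * X^4
      + C (a (m+2)) * (2*(A (m+2) + B (m+2)) + (2 + C (b (m+2)) * X) * (A (m+1) + B (m+1)))
          * Δ (m+1) * X^2 := by
    intro m
    have hdA2 : derivative (A (m+2)) = C (b (m+2)) * A (m+1)
        + (1 + C (b (m+2)) * X) * derivative (A (m+1))
        + C (a (m+2)) * (2*X) * A m + C (a (m+2)) * X^2 * derivative (A m) := by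
      rw [hA (m+2) (by omega)]
      simp only [show m+2-1 = m+1 from rfl, show m+2-2 = m from rfl]
      simp only [derivative_add, derivative_mul, derivative_one, derivative_C,
        derivative_X, derivative_X_pow, Nat.cast_ofNat, map_ofNat]
      ring
    have hdB2 : derivative (B (m+2)) = C (b (m+2)) * B (m+1)
        + (1 + C (b (m+2)) * X) * derivative (B (m+1))
        + C (a (m+2)) * (2*X) * B m + C (a (m+2)) * X^2 * derivative (B m) := by
      rw [hB (m+2) (by omega)]
      simp only [show m+2-1 = m+1 from rfl, show m+2-2 = m from rfl]
      simp only [derivative_add, derivative_mul, derivative_one, derivative_C,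
        derivative_X, derivative_X_pow, Nat.cast_ofNat, map_ofNat]
      ring
    rw [hU (m+2)]
    simp only [show m+2-1 = m+1 from rfl]
    rw [hU (m+1)]
    simp only [show m+1-1 = m from rfl]
    rw [hT (m+1), hΔ (m+1), hL (m+2), hL (m+1), hJ (m+2), hJ (m+1),
        hF (m+2), hF (m+1), hF m, hH (m+2), hH (m+1), hH m]
    simp only [show m+2-1 = m+1 from rfl, show m+1-1 = m from rfl]
    rw [hdA2, hdB2, hA (m+2) (by omega), hB (m+2) (by omega)]
    simp only [show m+2-1 = m+1 from rfl, show m+2-2 = m from rfl]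
    simp only [map_mul, map_pow, map_ofNat]
    ring
  -- lemma 4 : structure of W
  have hWlem : ∀ k : ℕ,
      X * ((A (k+1) + B (k+1)) * L (k+2) + (A (k+2) + B (k+2)) * F (k+1))
          + B (k+1) * J (k+2) + B (k+2) * H (k+1)
      = C 3 * T (k+1) + C (3 * b (k+2)) * T (k+1) * X^1
        + C (a (k+2)) * U (k+1) * X^2
        + C (2 * a (k+2)) * ((A (k+1) + B (k+1)) * Δ (k+1)) * X^2 := by
    intro k
    have hdA2 : derivative (A (k+2)) = C (b (k+2)) * A (k+1)
        + (1 + C (b (k+2)) * X) * derivative (A (k+1))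
        + C (a (k+2)) * (2*X) * A k + C (a (k+2)) * X^2 * derivative (A k) := by
      rw [hA (k+2) (by omega)]
      simp only [show k+2-1 = k+1 from rfl, show k+2-2 = k from rfl]
      simp only [derivative_add, derivative_mul, derivative_one, derivative_C,
        derivative_X, derivative_X_pow, Nat.cast_ofNat, map_ofNat]
      ring
    have hdB2 : derivative (B (k+2)) = C (b (k+2)) * B (k+1)
        + (1 + C (b (k+2)) * X) * derivative (B (k+1))
        + C (a (k+2)) * (2*X) * B k + C (a (k+2)) * X^2 * derivative (B k) := by
      rw [hB (k+2) (by omega)]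
      simp only [show k+2-1 = k+1 from rfl, show k+2-2 = k from rfl]
      simp only [derivative_add, derivative_mul, derivative_one, derivative_C,
        derivative_X, derivative_X_pow, Nat.cast_ofNat, map_ofNat]
      ring
    rw [hU (k+1)]
    simp only [show k+1-1 = k from rfl]
    rw [hT (k+1), hΔ (k+1), hL (k+2), hL (k+1), hJ (k+2), hJ (k+1),
        hF (k+1), hH (k+1)]
    simp only [show k+2-1 = k+1 from rfl, show k+1-1 = k from rfl]
    rw [hdA2, hdB2, hA (k+2) (by omega), hB (k+2) (by omega)]
    simp only [show k+2-1 = k+1 from rfl, show k+2-2 = k from rfl]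
    simp only [map_mul, map_pow, map_ofNat]
    ring
  -- W has vanishing coefficient at 2k+1
  have hWvan : ∀ k : ℕ,
      (X * ((A (k+1) + B (k+1)) * L (k+2) + (A (k+2) + B (k+2)) * F (k+1))
          + B (k+1) * J (k+2) + B (k+2) * H (k+1)).coeff (2*k+1) = 0 := by
    intro k
    rw [hWlem k, hDel k]
    have e : C (2 * a (k+2)) * ((A (k+1) + B (k+1))
          * (C ((-1:ℝ)^k * ∏ i ∈ Finset.Icc 1 (k+1), a i) * X^(2*k+1))) * X^2
        = C (2 * a (k+2) * ((-1:ℝ)^k * ∏ i ∈ Finset.Icc 1 (k+1), a i))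
            * (A (k+1) + B (k+1)) * X^(2*k+3) := by
      simp only [C_mul, C_pow, C_neg, C_1]; ring
    rw [e]
    simp only [coeff_add, coeff_mul_X_pow', coeff_C_mul,
      hTvan (k+1) (2*k+1) (by omega), hTvan (k+1) (2*k+1-1) (by omega),
      hUvan (k+1) (by omega) (2*k+1-2) (by omega),
      mul_zero, ite_self, add_zero, zero_add]
    rw [if_neg (by omega)]
  -- the key coefficient identity for n ≥ 2
  have key2 : ∀ m : ℕ, (U (m+2)).coeff (2*m+3) = (T (m+1)).coeff (2*m+3) := by
    intro m
    have haa := ha (m+2) (by omega)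
    simp only [show m+2-1 = m+1 from rfl, show m+2-2 = m from rfl,
      show 2*(m+2)-3 = 2*m+1 by omega, show 2*(m+2)-1 = 2*m+3 by omega] at haa
    have hm := master m
    rw [hDel m] at hm
    have e : C (a (m+2)) * (2*(A (m+2) + B (m+2))
            + (2 + C (b (m+2)) * X) * (A (m+1) + B (m+1)))
          * (C ((-1:ℝ)^m * ∏ i ∈ Finset.Icc 1 (m+1), a i) * X^(2*m+1)) * X^2
        = C (a (m+2) * ((-1:ℝ)^m * ∏ i ∈ Finset.Icc 1 (m+1), a i))
            * (2*(A (m+2) + B (m+2)) + (2 + C (b (m+2)) * X) * (A (m+1) + B (m+1)))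
            * X^(2*m+3) := by
      simp only [C_mul, C_pow, C_neg, C_1]; ring
    rw [e] at hm
    rw [hm]
    have hM0 : (2*(A (m+2) + B (m+2))).coeff 0
        + ((2 + C (b (m+2)) * X) * (A (m+1) + B (m+1))).coeff 0 = 4 := by
      obtain ⟨e1, e2⟩ := hABev (m+2)
      obtain ⟨e3, e4⟩ := hABev (m+1)
      simp only [coeff_zero_eq_eval_zero, eval_add, eval_mul, eval_ofNat, eval_C,
        eval_X, e1, e2, e3, e4]
      norm_num
    have hW4 : (if 4 ≤ 2*m+3 then (a (m+2))^2
        * ((X * ((A m + B m) * L (m+1) + (A (m+1) + B (m+1)) * F m)).coeff (2*m+3-4)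
            + (B m * J (m+1)).coeff (2*m+3-4)
            + (B (m+1) * H m).coeff (2*m+3-4)) else 0) = 0 := by
      rcases m with _ | k
      · rw [if_neg (by omega)]
      · have hv := hWvan k
        rw [coeff_add, coeff_add] at hv
        rw [if_pos (by omega), show 2*(k+1)+3-4 = 2*k+1 by omega, hv, mul_zero]
    simp only [coeff_add, coeff_mul_X_pow', coeff_C_mul]
    rw [hW4]
    simp only [if_pos (show (1:ℕ) ≤ 2*m+3 by omega), if_pos (show (2:ℕ) ≤ 2*m+3 by omega),
      if_pos (show (3:ℕ) ≤ 2*m+3 by omega), if_pos (le_refl (2*m+3)), Nat.sub_self,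
      show 2*m+3-1 = 2*m+2 by omega, show 2*m+3-2 = 2*m+1 by omega,
      show 2*m+3-3 = 2*m by omega]
    rw [hTvan (m+1) (2*m+2) (by omega), hTvan (m+1) (2*m+1) (by omega),
      hUvan (m+1) (by omega) (2*m) (by omega), hM0]
    linear_combination 2 * haa
  refine ⟨hT0, ?_⟩
  intro n hn
  match n, hn with
  | 1, _ =>
    show (U 1).coeff 1 = (T 0).coeff 1
    have hcd : ∀ p : ℝ[X], p.coeff 1 = (derivative p).eval 0 := by
      intro p
      rw [← coeff_zero_eq_eval_zero, coeff_derivative]; simp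
    have ht1 : (T 1).coeff 1 = 0 := hTvan 1 1 (by omega)
    rw [hT 1, hF 1, hH 1, hA1, hB1, hcd] at ht1
    simp only [derivative_add, derivative_sub, derivative_mul, derivative_one,
      derivative_C, derivative_X, derivative_X_pow, derivative_zero, derivative_neg,
      eval_add, eval_sub, eval_mul, eval_neg, eval_one, eval_zero, eval_X, eval_C,
      eval_pow, eval_ofNat, mul_zero, zero_mul, mul_one, one_mul, add_zero, zero_add] at ht1
    rw [hcd, hcd, hT0, hU 1]
    simp only [show (1:ℕ)-1 = 0 from rfl]
    rw [hL 1, hJ 1, hF 1, hH 1]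
    simp only [show (1:ℕ)-1 = 0 from rfl]
    rw [hA1, hB1, hA0, hB0]
    simp only [derivative_add, derivative_sub, derivative_mul, derivative_one,
      derivative_C, derivative_X, derivative_X_pow, derivative_zero, derivative_neg,
      eval_add, eval_sub, eval_mul, eval_neg, eval_one, eval_zero, eval_X, eval_C,
      eval_pow, eval_ofNat, mul_zero, zero_mul, mul_one, one_mul, add_zero, zero_add]
    linear_combination 2 * ht1
  | (m+2), _ =>
    show (U (m+2)).coeff (2*(m+2)-1) = (T (m+1)).coeff (2*(m+2)-1)
    rw [show 2*(m+2)-1 = 2*m+3 by omega]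
    exact key2 m
end
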